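/- The map f : ℝ² → ℝ⁵ defined by f(u,v) = (x,y,z,p,q) with x = u, y = 2uv + 3u²v − v³, z = (1/3)u³ + uv² + (1/4)u⁴ + (3/2)u²v² − (3/4)v⁴, p = u² − v² + u³ − 3uv², q = v, satisfies the contact condition and the Hess = 1 condition at every point of ℝ²; moreover p·x + q·y − z = (2/3)u³ + (3/4)u⁴ − (3/2)u²v² − (1/4)v⁴ identically on ℝ². (Thus f is a geometric solution to the improper affine sphere equation Hess = 1.) -/

import Mathlib

noncomputable section

/-- Partial derivative in the direction `(1,0)`. -/
def pu (g : ℝ × ℝ → ℝ) (a : ℝ × ℝ) : ℝ := fderiv ℝ g a (1, 0)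

/-- Partial derivative in the direction `(0,1)`. -/
def pv (g : ℝ × ℝ → ℝ) (a : ℝ × ℝ) : ℝ := fderiv ℝ g a (0, 1)

/-- Jacobian determinant `g_u h_v - g_v h_u`. -/
def Jac (g h : ℝ × ℝ → ℝ) (a : ℝ × ℝ) : ℝ := pu g a * pv h a - pv g a * pu h a

/-- `x = u`. -/
def X19 : ℝ × ℝ → ℝ := fun a => a.1

/-- `y = 2uv + 3u²v - v³`. -/
def Y19 : ℝ × ℝ → ℝ := fun a => 2 * a.1 * a.2 + 3 * a.1 ^ 2 * a.2 - a.2 ^ 3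

/-- `z = (1/3)u³ + uv² + (1/4)u⁴ + (3/2)u²v² - (3/4)v⁴`. -/
def Z19 : ℝ × ℝ → ℝ := fun a =>
  (1 / 3) * a.1 ^ 3 + a.1 * a.2 ^ 2 + (1 / 4) * a.1 ^ 4
    + (3 / 2) * a.1 ^ 2 * a.2 ^ 2 - (3 / 4) * a.2 ^ 4

/-- `p = u² - v² + u³ - 3uv²`. -/
def P19 : ℝ × ℝ → ℝ := fun a => a.1 ^ 2 - a.2 ^ 2 + a.1 ^ 3 - 3 * a.1 * a.2 ^ 2

/-- `q = v`. -/
def Q19 : ℝ × ℝ → ℝ := fun a => a.2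


section helpers

lemma hX19 (a : ℝ × ℝ) : pu X19 a = 1 ∧ pv X19 a = 0 := by
  have h : HasFDerivAt X19 (ContinuousLinearMap.fst ℝ ℝ ℝ) a := hasFDerivAt_fst
  rw [pu, pv, h.fderiv]
  constructor <;> simp

lemma hQ19 (a : ℝ × ℝ) : pu Q19 a = 0 ∧ pv Q19 a = 1 := by
  have h : HasFDerivAt Q19 (ContinuousLinearMap.snd ℝ ℝ ℝ) a := hasFDerivAt_snd
  rw [pu, pv, h.fderiv]
  constructor <;> simp

lemma hY19 (a : ℝ × ℝ) :
    pu Y19 a = 2 * a.2 + 6 * a.1 * a.2 ∧ pv Y19 a = 2 * a.1 + 3 * a.1 ^ 2 - 3 * a.2 ^ 2 := by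
  have h1 : HasFDerivAt (fun b : ℝ × ℝ => b.1) (ContinuousLinearMap.fst ℝ ℝ ℝ) a := hasFDerivAt_fst
  have h2 : HasFDerivAt (fun b : ℝ × ℝ => b.2) (ContinuousLinearMap.snd ℝ ℝ ℝ) a := hasFDerivAt_snd
  have e : Y19 = fun b : ℝ × ℝ => 2 * b.1 * b.2 + 3 * (b.1 * b.1) * b.2 - b.2 * (b.2 * b.2) := by
    funext b; simp only [Y19]; ring
  have h := (((h1.const_mul 2).mul h2).add
    (((h1.mul h1).const_mul 3).mul h2)).sub (h2.mul (h2.mul h2))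
  replace h : HasFDerivAt Y19 _ a :=
    h.congr_of_eventuallyEq (Filter.Eventually.of_forall fun b => by rw [e]; rfl)
  rw [pu, pv, h.fderiv]
  constructor <;> simp <;> ring

lemma hZ19 (a : ℝ × ℝ) :
    pu Z19 a = a.1 ^ 2 + a.2 ^ 2 + a.1 ^ 3 + 3 * a.1 * a.2 ^ 2 ∧
    pv Z19 a = 2 * a.1 * a.2 + 3 * a.1 ^ 2 * a.2 - 3 * a.2 ^ 3 := by
  have h1 : HasFDerivAt (fun b : ℝ × ℝ => b.1) (ContinuousLinearMap.fst ℝ ℝ ℝ) a := hasFDerivAt_fst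
  have h2 : HasFDerivAt (fun b : ℝ × ℝ => b.2) (ContinuousLinearMap.snd ℝ ℝ ℝ) a := hasFDerivAt_snd
  have e : Z19 = fun b : ℝ × ℝ =>
      (1 / 3) * (b.1 * (b.1 * b.1)) + b.1 * (b.2 * b.2) + (1 / 4) * (b.1 * (b.1 * (b.1 * b.1)))
        + (3 / 2) * (b.1 * b.1) * (b.2 * b.2) - (3 / 4) * (b.2 * (b.2 * (b.2 * b.2))) := by
    funext b; simp only [Z19]; ring
  have h := (((((h1.mul (h1.mul h1)).const_mul (1/3 : ℝ)).add (h1.mul (h2.mul h2))).add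
      ((h1.mul (h1.mul (h1.mul h1))).const_mul (1/4 : ℝ))).add
      (((h1.mul h1).const_mul (3/2 : ℝ)).mul (h2.mul h2))).sub
      ((h2.mul (h2.mul (h2.mul h2))).const_mul (3/4 : ℝ))
  replace h : HasFDerivAt Z19 _ a :=
    h.congr_of_eventuallyEq (Filter.Eventually.of_forall fun b => by rw [e]; rfl)
  rw [pu, pv, h.fderiv]
  constructor <;> simp <;> ring

lemma hP19 (a : ℝ × ℝ) :
    pu P19 a = 2 * a.1 + 3 * a.1 ^ 2 - 3 * a.2 ^ 2 ∧
    pv P19 a = -2 * a.2 - 6 * a.1 * a.2 := by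
  have h1 : HasFDerivAt (fun b : ℝ × ℝ => b.1) (ContinuousLinearMap.fst ℝ ℝ ℝ) a := hasFDerivAt_fst
  have h2 : HasFDerivAt (fun b : ℝ × ℝ => b.2) (ContinuousLinearMap.snd ℝ ℝ ℝ) a := hasFDerivAt_snd
  have e : P19 = fun b : ℝ × ℝ =>
      b.1 * b.1 - b.2 * b.2 + b.1 * (b.1 * b.1) - 3 * b.1 * (b.2 * b.2) := by
    funext b; simp only [P19]; ring
  have h := (((h1.mul h1).sub (h2.mul h2)).add (h1.mul (h1.mul h1))).sub
      ((h1.const_mul 3).mul (h2.mul h2))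
  replace h : HasFDerivAt P19 _ a :=
    h.congr_of_eventuallyEq (Filter.Eventually.of_forall fun b => by rw [e]; rfl)
  rw [pu, pv, h.fderiv]
  constructor <;> simp <;> ring

end helpers

/-- The explicit map `(u,v) ↦ (x,y,z,p,q)` above is a geometric solution to Hess = 1,
whose dual is given by `px + qy - z = (2/3)u³ + (3/4)u⁴ - (3/2)u²v² - (1/4)v⁴`. -/
theorem stmt19 :
    (∀ a : ℝ × ℝ,
      pu Z19 a = P19 a * pu X19 a + Q19 a * pu Y19 a ∧
      pv Z19 a = P19 a * pv X19 a + Q19 a * pv Y19 a) ∧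
    (∀ a : ℝ × ℝ, Jac X19 Y19 a = Jac P19 Q19 a) ∧
    (∀ a : ℝ × ℝ, P19 a * X19 a + Q19 a * Y19 a - Z19 a
      = (2 / 3) * a.1 ^ 3 + (3 / 4) * a.1 ^ 4
        - (3 / 2) * a.1 ^ 2 * a.2 ^ 2 - (1 / 4) * a.2 ^ 4) := by
  refine ⟨fun a => ?_, fun a => ?_, fun a => ?_⟩
  · obtain ⟨zx, zy⟩ := hZ19 a
    obtain ⟨xu, xv⟩ := hX19 a
    obtain ⟨yu, yv⟩ := hY19 a
    rw [zx, zy, xu, xv, yu, yv]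
    constructor <;> simp only [P19, Q19] <;> ring
  · obtain ⟨xu, xv⟩ := hX19 a
    obtain ⟨yu, yv⟩ := hY19 a
    obtain ⟨pu', pv'⟩ := hP19 a
    obtain ⟨qu, qv⟩ := hQ19 a
    rw [Jac, Jac, xu, xv, yu, yv, pu', pv', qu, qv]
    ring
  · simp only [P19, Q19, X19, Y19, Z19]
    ring
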